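/- arXiv:1309.6696 — 7 statements merged into one kernel-verified Lean document; each statement's English description precedes it below -/
import Mathlib

section
/- Let d ≥ 2 and N ≥ 1 be integers, and for each positive integer n set D_n = Σ_{i=0}^{N} d^{n·i}. If there exists a positive integer n with gcd(D_n, N+1) = 1, then there exists a positive integer n with n ≤ φ(N+1) (Euler's totient of N+1) and gcd(D_n, N+1) = 1. (Hence the hypothesis of the paper's main theorem need only be checked for n in the range [1, φ(N+1)].) -/
/-!
Fix a prime `p ∣ N + 1`. Since `p - 1 = φ p` divides `φ (N + 1)`, Fermat's little theorem gives
`x ^ (m + φ (N + 1) * t) = x ^ m` for all `x : ZMod p` and `m > 0` (for `x = 0` because both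
exponents are positive). Hence `D_{m + φ(N+1) t} ≡ D_m` modulo every prime factor of `N + 1`,
so coprimality of `D_n` with `N + 1` only depends on the residue of `n` modulo `φ (N + 1)`, which
has a representative in `{1, …, φ (N + 1)}`.
-/

open Finset

theorem ZMod.pow_add_totient_mul_of_dvd {p M : ℕ} [Fact p.Prime] (hpM : p ∣ M) (x : ZMod p)
    {m : ℕ} (hm : 0 < m) (t : ℕ) : x ^ (m + M.totient * t) = x ^ m := by
  by_cases hx : x = 0
  · simp [hx, hm.ne']
  obtain ⟨c, hc⟩ : p - 1 ∣ M.totient :=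
    Nat.totient_prime (Fact.out : p.Prime) ▸ Nat.totient_dvd_of_dvd hpM
  rw [pow_add, hc, mul_assoc, pow_mul, ZMod.pow_card_sub_one_eq_one hx, one_pow, mul_one]

theorem prime_dvd_sum_pow_add_totient_mul_iff {p M : ℕ} (hp : p.Prime) (hpM : p ∣ M)
    (d k : ℕ) {m : ℕ} (hm : 0 < m) (t : ℕ) :
    p ∣ ∑ i ∈ range k, d ^ ((m + M.totient * t) * i) ↔
      p ∣ ∑ i ∈ range k, d ^ (m * i) := by
  have := Fact.mk hp
  simp only [← ZMod.natCast_eq_zero_iff, Nat.cast_sum, Nat.cast_pow, pow_mul,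
    ZMod.pow_add_totient_mul_of_dvd hpM _ hm]

theorem Nat.Coprime.of_sum_pow_add_totient_mul {M d k m t : ℕ} (hm : 0 < m)
    (h : Nat.Coprime (∑ i ∈ range k, d ^ ((m + M.totient * t) * i)) M) :
    Nat.Coprime (∑ i ∈ range k, d ^ (m * i)) M :=
  Nat.coprime_of_dvd fun _ hp hpD hpM =>
    hp.not_dvd_one <| h ▸
      Nat.dvd_gcd ((prime_dvd_sum_pow_add_totient_mul_iff hp hpM d k hm t).2 hpD) hpM

theorem field_of_definition_totient_bound_general (d N : ℕ)
    (h : ∃ n : ℕ, 0 < n ∧ Nat.gcd (∑ i ∈ Finset.range (N + 1), d ^ (n * i)) (N + 1) = 1) :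
    ∃ n : ℕ, 0 < n ∧ n ≤ Nat.totient (N + 1) ∧
      Nat.gcd (∑ i ∈ Finset.range (N + 1), d ^ (n * i)) (N + 1) = 1 := by
  obtain ⟨n, hn, hcop⟩ := h
  set φ := (N + 1).totient
  have hφ : 0 < φ := Nat.totient_pos.mpr N.succ_pos
  have hreduce : n = ((n - 1) % φ + 1) + φ * ((n - 1) / φ) := by
    have := Nat.mod_add_div (n - 1) φ
    omega
  refine ⟨(n - 1) % φ + 1, Nat.succ_pos _, Nat.mod_lt _ hφ, ?_⟩
  rw [hreduce] at hcop
  exact Nat.Coprime.of_sum_pow_add_totient_mul (Nat.succ_pos _) hcop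

theorem field_of_definition_totient_bound (d N : ℕ) (hd : 2 ≤ d) (hN : 1 ≤ N)
    (h : ∃ n : ℕ, 0 < n ∧ Nat.gcd (∑ i ∈ Finset.range (N + 1), d ^ (n * i)) (N + 1) = 1) :
    ∃ n : ℕ, 0 < n ∧ n ≤ Nat.totient (N + 1) ∧
      Nat.gcd (∑ i ∈ Finset.range (N + 1), d ^ (n * i)) (N + 1) = 1 :=
  field_of_definition_totient_bound_general d N h
end

section
/- Let φ : ℂ³ → ℂ³ be given by φ(x, y, z) = ((x − I·z)⁴, (y + I·z)⁴, z⁴). If a matrix A ∈ GL₃(ℂ) satisfies: for every v ∈ ℂ³ with v ≠ 0 there exists c ∈ ℂ with c ≠ 0 such that φ(A·v) = c • (A·φ(v)), then A is a scalar multiple of the identity matrix. (That is, the stabilizer of φ in PGL₃(ℂ) under conjugation is trivial.) -/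
open Matrix

noncomputable def phiEx1 (v : Fin 3 → ℂ) : Fin 3 → ℂ :=
  ![(v 0 - Complex.I * v 2) ^ 4, (v 1 + Complex.I * v 2) ^ 4, (v 2) ^ 4]

private lemma comp3ex1 (M : Matrix (Fin 3) (Fin 3) ℂ)
    (hA : ∀ v : Fin 3 → ℂ, v ≠ 0 → ∃ c : ℂ, c ≠ 0 ∧
      phiEx1 (M.mulVec v) = c • (M.mulVec (phiEx1 v)))
    (x y z : ℂ) (hv : ¬ (x = 0 ∧ y = 0 ∧ z = 0)) :
    ∃ c : ℂ, c ≠ 0 ∧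
      (M 0 0 * x + M 0 1 * y + M 0 2 * z - Complex.I * (M 2 0 * x + M 2 1 * y + M 2 2 * z)) ^ 4
        = c * (M 0 0 * (x - Complex.I * z) ^ 4 + M 0 1 * (y + Complex.I * z) ^ 4 + M 0 2 * z ^ 4) ∧
      (M 1 0 * x + M 1 1 * y + M 1 2 * z + Complex.I * (M 2 0 * x + M 2 1 * y + M 2 2 * z)) ^ 4
        = c * (M 1 0 * (x - Complex.I * z) ^ 4 + M 1 1 * (y + Complex.I * z) ^ 4 + M 1 2 * z ^ 4) ∧
      (M 2 0 * x + M 2 1 * y + M 2 2 * z) ^ 4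
        = c * (M 2 0 * (x - Complex.I * z) ^ 4 + M 2 1 * (y + Complex.I * z) ^ 4 + M 2 2 * z ^ 4) := by
  obtain ⟨c, hc, h⟩ := hA ![x, y, z] (by
    intro h0
    exact hv ⟨by simpa using congrFun h0 0, by simpa using congrFun h0 1,
      by simpa using congrFun h0 2⟩)
  have h0 := congrFun h 0
  have h1 := congrFun h 1
  have h2 := congrFun h 2
  simp only [phiEx1, Matrix.mulVec, dotProduct, Fin.sum_univ_three, Matrix.cons_val_zero,
    Matrix.cons_val_one, Matrix.head_cons, Matrix.cons_val_two, Matrix.tail_cons, Pi.smul_apply,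
    smul_eq_mul] at h0 h1 h2
  exact ⟨c, hc, by linear_combination h0, by linear_combination h1, by linear_combination h2⟩

open Complex in
private lemma main9ex1 (a b c' d e f g h i : ℂ)
    (hdet : a * e * i - a * f * h - b * d * i + b * f * g + c' * d * h - c' * e * g ≠ 0)
    (hv : ∀ x y z : ℂ, ¬(x = 0 ∧ y = 0 ∧ z = 0) → ∃ k : ℂ, k ≠ 0 ∧
      (a*x + b*y + c'*z - I*(g*x + h*y + i*z))^4 = k*(a*(x - I*z)^4 + b*(y + I*z)^4 + c'*z^4) ∧
      (d*x + e*y + f*z + I*(g*x + h*y + i*z))^4 = k*(d*(x - I*z)^4 + e*(y + I*z)^4 + f*z^4) ∧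
      (g*x + h*y + i*z)^4 = k*(g*(x - I*z)^4 + h*(y + I*z)^4 + i*z^4)) :
    b = 0 ∧ c' = 0 ∧ d = 0 ∧ f = 0 ∧ g = 0 ∧ h = 0 ∧ a = i ∧ e = i := by
  have hI4 : I^4 = 1 := by linear_combination (I^2 - 1) * Complex.I_sq
  obtain ⟨k0, hk0, A1, A2, A3⟩ := hv 1 0 0 (by simp)
  obtain ⟨k1, hk1, B1, B2, B3⟩ := hv 0 1 0 (by simp)
  have cross : ∀ t : ℂ,
      (g + t*h)^4 * (a + b*t^4) = (a + t*b - I*(g + t*h))^4 * (g + h*t^4) ∧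
      (g + t*h)^4 * (d + e*t^4) = (d + t*e + I*(g + t*h))^4 * (g + h*t^4) := by
    intro t
    obtain ⟨k, hk, h1, h2, h3⟩ := hv 1 t 0 (by simp)
    exact ⟨by linear_combination (a + b*t^4) * h3 - (g + h*t^4) * h1,
      by linear_combination (d + e*t^4) * h3 - (g + h*t^4) * h2⟩
  have C2 : 6*g^2*h^2*a = 6*(a - I*g)^2*(b - I*h)^2*g := by
    linear_combination (29531/10080 : ℂ) * (cross 0).1 + (-481/35 : ℂ) * (cross 1).1
      + (621/20 : ℂ) * (cross 2).1 + (-2003/45 : ℂ) * (cross 3).1 + (691/16 : ℂ) * (cross 4).1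
      + (-141/5 : ℂ) * (cross 5).1 + (2143/180 : ℂ) * (cross 6).1 + (-103/35 : ℂ) * (cross 7).1
      + (363/1120 : ℂ) * (cross 8).1
  have C3 : 4*g*h^3*a = 4*(a - I*g)*(b - I*h)^3*g := by
    linear_combination (-267/160 : ℂ) * (cross 0).1 + (349/36 : ℂ) * (cross 1).1
      + (-18353/720 : ℂ) * (cross 2).1 + (797/20 : ℂ) * (cross 3).1 + (-1457/36 : ℂ) * (cross 4).1
      + (4891/180 : ℂ) * (cross 5).1 + (-187/16 : ℂ) * (cross 6).1 + (527/180 : ℂ) * (cross 7).1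
      + (-469/1440 : ℂ) * (cross 8).1
  have C5 : 4*g^3*h*b = 4*(a - I*g)^3*(b - I*h)*h := by
    linear_combination (-9/80 : ℂ) * (cross 0).1 + (115/144 : ℂ) * (cross 1).1
      + (-179/72 : ℂ) * (cross 2).1 + (71/16 : ℂ) * (cross 3).1 + (-179/36 : ℂ) * (cross 4).1
      + (2581/720 : ℂ) * (cross 5).1 + (-13/8 : ℂ) * (cross 6).1 + (61/144 : ℂ) * (cross 7).1
      + (-7/144 : ℂ) * (cross 8).1
  have C6 : 6*g^2*h^2*b = 6*(a - I*g)^2*(b - I*h)^2*h := by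
    linear_combination (13/960 : ℂ) * (cross 0).1 + (-73/720 : ℂ) * (cross 1).1
      + (239/720 : ℂ) * (cross 2).1 + (-149/240 : ℂ) * (cross 3).1 + (209/288 : ℂ) * (cross 4).1
      + (-391/720 : ℂ) * (cross 5).1 + (61/240 : ℂ) * (cross 6).1 + (-49/720 : ℂ) * (cross 7).1
      + (23/2880 : ℂ) * (cross 8).1
  have D2 : 6*g^2*h^2*d = 6*(d + I*g)^2*(e + I*h)^2*g := by
    linear_combination (29531/10080 : ℂ) * (cross 0).2 + (-481/35 : ℂ) * (cross 1).2
      + (621/20 : ℂ) * (cross 2).2 + (-2003/45 : ℂ) * (cross 3).2 + (691/16 : ℂ) * (cross 4).2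
      + (-141/5 : ℂ) * (cross 5).2 + (2143/180 : ℂ) * (cross 6).2 + (-103/35 : ℂ) * (cross 7).2
      + (363/1120 : ℂ) * (cross 8).2
  have D3 : 4*g*h^3*d = 4*(d + I*g)*(e + I*h)^3*g := by
    linear_combination (-267/160 : ℂ) * (cross 0).2 + (349/36 : ℂ) * (cross 1).2
      + (-18353/720 : ℂ) * (cross 2).2 + (797/20 : ℂ) * (cross 3).2 + (-1457/36 : ℂ) * (cross 4).2
      + (4891/180 : ℂ) * (cross 5).2 + (-187/16 : ℂ) * (cross 6).2 + (527/180 : ℂ) * (cross 7).2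
      + (-469/1440 : ℂ) * (cross 8).2
  have D5 : 4*g^3*h*e = 4*(d + I*g)^3*(e + I*h)*h := by
    linear_combination (-9/80 : ℂ) * (cross 0).2 + (115/144 : ℂ) * (cross 1).2
      + (-179/72 : ℂ) * (cross 2).2 + (71/16 : ℂ) * (cross 3).2 + (-179/36 : ℂ) * (cross 4).2
      + (2581/720 : ℂ) * (cross 5).2 + (-13/8 : ℂ) * (cross 6).2 + (61/144 : ℂ) * (cross 7).2
      + (-7/144 : ℂ) * (cross 8).2
  have D6 : 6*g^2*h^2*e = 6*(d + I*g)^2*(e + I*h)^2*h := by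
    linear_combination (13/960 : ℂ) * (cross 0).2 + (-73/720 : ℂ) * (cross 1).2
      + (239/720 : ℂ) * (cross 2).2 + (-149/240 : ℂ) * (cross 3).2 + (209/288 : ℂ) * (cross 4).2
      + (-391/720 : ℂ) * (cross 5).2 + (61/240 : ℂ) * (cross 6).2 + (-49/720 : ℂ) * (cross 7).2
      + (23/2880 : ℂ) * (cross 8).2
  have hgh : g = 0 ∧ h = 0 := by
    by_cases hg : g = 0
    · refine ⟨hg, ?_⟩
      by_contra hh
      subst hg
      -- from C5 : a^3*(b - I*h)*h = 0
      have e1 : a^3*(b - I*h)*h = 0 := by linear_combination (-1/4 : ℂ) * C5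
      have e2 : a^3*(b - I*h) = 0 := (mul_eq_zero.mp e1).resolve_right hh
      rcases mul_eq_zero.mp e2 with e3 | e3
      · have ha0 : a = 0 := by
          have := pow_eq_zero_iff (n := 3) (by norm_num) |>.mp e3
          exact this
        have e4 : d^3*(e + I*h)*h = 0 := by linear_combination (-1/4 : ℂ) * D5
        have e5 : d^3*(e + I*h) = 0 := (mul_eq_zero.mp e4).resolve_right hh
        rcases mul_eq_zero.mp e5 with e6 | e6
        · have hd0 : d = 0 := pow_eq_zero_iff (n := 3) (by norm_num) |>.mp e6
          exact hdet (by rw [ha0, hd0]; ring)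
        · -- e + I*h = 0 and B2 : (e+I*h)^4 = k1 * e  give e = 0, then h = 0
          have he0 : e = 0 := by
            have : k1 * e = 0 := by linear_combination ((e + I*h)^3 + 0)*e6 - B2 +
              ((e + I*h)^2*(e + I*h))*e6 - ((e + I*h)^2*(e + I*h))*e6
            exact (mul_eq_zero.mp this).resolve_left hk1
          have : I * h = 0 := by linear_combination e6 - he0
          exact hh ((mul_eq_zero.mp this).resolve_left Complex.I_ne_zero)
      · -- b = I*h, then B1 : (b - I*h)^4 = k1*b gives b = 0 then h = 0
        have hb0 : b = 0 := by
          have : k1 * b = 0 := by linear_combination ((b - I*h)^3)*e3 - B1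
          exact (mul_eq_zero.mp this).resolve_left hk1
        have : I * h = 0 := by linear_combination -e3 + hb0
        exact hh ((mul_eq_zero.mp this).resolve_left Complex.I_ne_zero)
    · exfalso
      by_cases hh : h = 0
      · subst hh
        -- from C3 : (a - I*g)*b^3*g = 0
        have e1 : (a - I*g)*b^3*g = 0 := by linear_combination (-1/4 : ℂ) * C3
        have e2 : (a - I*g)*b^3 = 0 := (mul_eq_zero.mp e1).resolve_right hg
        rcases mul_eq_zero.mp e2 with e3 | e3
        · have ha0 : a = 0 := by
            have : k0 * a = 0 := by linear_combination ((a - I*g)^3)*e3 - A1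
            exact (mul_eq_zero.mp this).resolve_left hk0
          have : I * g = 0 := by linear_combination -e3 + ha0
          exact hg ((mul_eq_zero.mp this).resolve_left Complex.I_ne_zero)
        · have hb0 : b = 0 := pow_eq_zero_iff (n := 3) (by norm_num) |>.mp e3
          have e4 : (d + I*g)*e^3*g = 0 := by linear_combination (-1/4 : ℂ) * D3
          have e5 : (d + I*g)*e^3 = 0 := (mul_eq_zero.mp e4).resolve_right hg
          rcases mul_eq_zero.mp e5 with e6 | e6
          · have hd0 : d = 0 := by
              have : k0 * d = 0 := by linear_combination ((d + I*g)^3)*e6 - A2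
              exact (mul_eq_zero.mp this).resolve_left hk0
            have : I * g = 0 := by linear_combination e6 - hd0
            exact hg ((mul_eq_zero.mp this).resolve_left Complex.I_ne_zero)
          · have he0 : e = 0 := pow_eq_zero_iff (n := 3) (by norm_num) |>.mp e6
            exact hdet (by rw [hb0, he0]; ring)
      · -- g ≠ 0, h ≠ 0 : columns proportional
        have r1 : a*h - b*g = 0 := by
          have : g^2*h^2*(a*h - b*g) = 0 := by
            linear_combination (h/6)*C2 - (g/6)*C6
          exact (mul_eq_zero.mp this).resolve_left
            (mul_ne_zero (pow_ne_zero 2 hg) (pow_ne_zero 2 hh))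
        have r2 : d*h - e*g = 0 := by
          have : g^2*h^2*(d*h - e*g) = 0 := by
            linear_combination (h/6)*D2 - (g/6)*D6
          exact (mul_eq_zero.mp this).resolve_left
            (mul_ne_zero (pow_ne_zero 2 hg) (pow_ne_zero 2 hh))
        have : g*(a * e * i - a * f * h - b * d * i + b * f * g + c' * d * h - c' * e * g) = 0 := by
          linear_combination (d*i - f*g)*r1 + (c'*g - a*i)*r2
        exact hdet ((mul_eq_zero.mp this).resolve_left hg)
  obtain ⟨hg, hh⟩ := hgh
  subst hg; subst hh
  -- Step B
  have hi : i ≠ 0 := fun h0 => hdet (by rw [h0]; ring)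
  have hi3 : i^3 ≠ 0 := pow_ne_zero 3 hi
  have hF : ∀ x : ℂ, (a*x + c' - I*i)^4 = i^3*(a*(x - I)^4 + b*I^4 + c') ∧
      (d*x + f + I*i)^4 = i^3*(d*(x - I)^4 + e*I^4 + f) := by
    intro x
    obtain ⟨k, hk, h1, h2, h3⟩ := hv x 0 1 (by simp)
    have hik : i^4 = k*i := by linear_combination h3
    have hk3 : k = i^3 := mul_right_cancel₀ hi (by linear_combination - hik)
    exact ⟨by linear_combination h1 + (a*(x - I)^4 + b*I^4 + c')*hk3,
      by linear_combination h2 + (d*(x - I)^4 + e*I^4 + f)*hk3⟩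
  have hH : ∀ y : ℂ, (b*y + c' - I*i)^4 = i^3*(a*I^4 + b*(y + I)^4 + c') ∧
      (e*y + f + I*i)^4 = i^3*(d*I^4 + e*(y + I)^4 + f) := by
    intro y
    obtain ⟨k, hk, h1, h2, h3⟩ := hv 0 y 1 (by simp)
    have hik : i^4 = k*i := by linear_combination h3
    have hk3 : k = i^3 := mul_right_cancel₀ hi (by linear_combination - hik)
    exact ⟨by linear_combination h1 + (a*I^4 + b*(y + I)^4 + c')*hk3,
      by linear_combination h2 + (d*I^4 + e*(y + I)^4 + f)*hk3⟩
  have F4 : a^4 = i^3*a := by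
    linear_combination (1/24 : ℂ)*(hF 0).1 + (-1/6 : ℂ)*(hF 1).1 + (1/4 : ℂ)*(hF 2).1
      + (-1/6 : ℂ)*(hF 3).1 + (1/24 : ℂ)*(hF 4).1
  have F3 : 4*a^3*(c' - I*i) = -4*I*i^3*a := by
    linear_combination (-5/12 : ℂ)*(hF 0).1 + (3/2 : ℂ)*(hF 1).1 + (-2 : ℂ)*(hF 2).1
      + (7/6 : ℂ)*(hF 3).1 + (-1/4 : ℂ)*(hF 4).1
  have G4 : d^4 = i^3*d := by
    linear_combination (1/24 : ℂ)*(hF 0).2 + (-1/6 : ℂ)*(hF 1).2 + (1/4 : ℂ)*(hF 2).2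
      + (-1/6 : ℂ)*(hF 3).2 + (1/24 : ℂ)*(hF 4).2
  have G3 : 4*d^3*(f + I*i) = -4*I*i^3*d := by
    linear_combination (-5/12 : ℂ)*(hF 0).2 + (3/2 : ℂ)*(hF 1).2 + (-2 : ℂ)*(hF 2).2
      + (7/6 : ℂ)*(hF 3).2 + (-1/4 : ℂ)*(hF 4).2
  have H4 : b^4 = i^3*b := by
    linear_combination (1/24 : ℂ)*(hH 0).1 + (-1/6 : ℂ)*(hH 1).1 + (1/4 : ℂ)*(hH 2).1
      + (-1/6 : ℂ)*(hH 3).1 + (1/24 : ℂ)*(hH 4).1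
  have H3 : 4*b^3*(c' - I*i) = 4*I*i^3*b := by
    linear_combination (-5/12 : ℂ)*(hH 0).1 + (3/2 : ℂ)*(hH 1).1 + (-2 : ℂ)*(hH 2).1
      + (7/6 : ℂ)*(hH 3).1 + (-1/4 : ℂ)*(hH 4).1
  have K4 : e^4 = i^3*e := by
    linear_combination (1/24 : ℂ)*(hH 0).2 + (-1/6 : ℂ)*(hH 1).2 + (1/4 : ℂ)*(hH 2).2
      + (-1/6 : ℂ)*(hH 3).2 + (1/24 : ℂ)*(hH 4).2
  have K3 : 4*e^3*(f + I*i) = 4*I*i^3*e := by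
    linear_combination (-5/12 : ℂ)*(hH 0).2 + (3/2 : ℂ)*(hH 1).2 + (-2 : ℂ)*(hH 2).2
      + (7/6 : ℂ)*(hH 3).2 + (-1/4 : ℂ)*(hH 4).2
  -- b = 0
  have hb : b = 0 := by
    by_contra hb
    have hb3 : b^3 = i^3 := by
      have : b*(b^3 - i^3) = 0 := by linear_combination H4
      exact sub_eq_zero.mp ((mul_eq_zero.mp this).resolve_left hb)
    have hcb : c' - I*i = I*b := by
      have h4 : (4*i^3)*(c' - I*i) = (4*i^3)*(I*b) := by
        linear_combination H3 - (4*(c' - I*i))*hb3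
      exact mul_left_cancel₀ (mul_ne_zero (by norm_num) hi3) h4
    by_cases ha0 : a = 0
    · have hc0 : i^3*c' = 0 := by
        linear_combination (-1 : ℂ)*(hF 0).1
          + ((c'-I*i)^3 + (c'-I*i)^2*(I*b) + (c'-I*i)*(I*b)^2 + (I*b)^3)*hcb
          + I^4*b*hb3 - i^3*I^4*ha0
      have hc' : c' = 0 := (mul_eq_zero.mp hc0).resolve_left hi3
      have hbi : b = -i := by
        have : I*b = I*(-i) := by linear_combination -hcb + hc'
        exact mul_left_cancel₀ Complex.I_ne_zero this
      rw [hbi] at hb3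
      exact hi3 (by linear_combination (-1/2 : ℂ)*hb3)
    · have ha3 : a^3 = i^3 := by
        have : a*(a^3 - i^3) = 0 := by linear_combination F4
        exact sub_eq_zero.mp ((mul_eq_zero.mp this).resolve_left ha0)
      have hca : c' - I*i = -(I*a) := by
        have h4 : (4*i^3)*(c' - I*i) = (4*i^3)*(-(I*a)) := by
          linear_combination F3 - (4*(c' - I*i))*ha3
        exact mul_left_cancel₀ (mul_ne_zero (by norm_num) hi3) h4
      have hba : b = -a := mul_left_cancel₀ Complex.I_ne_zero (by linear_combination hca - hcb)
      rw [hba] at hb3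
      exact hi3 (by linear_combination (-1/2 : ℂ)*hb3 + (-1/2 : ℂ)*ha3)
  subst hb
  have ha0 : a ≠ 0 := fun h0 => hdet (by rw [h0]; ring)
  have he0 : e ≠ 0 := fun h0 => hdet (by rw [h0]; ring)
  -- a = i, c' = 0
  have ha3 : a^3 = i^3 := by
    have : a*(a^3 - i^3) = 0 := by linear_combination F4
    exact sub_eq_zero.mp ((mul_eq_zero.mp this).resolve_left ha0)
  have hca : c' - I*i = -(I*a) := by
    have h4 : (4*i^3)*(c' - I*i) = (4*i^3)*(-(I*a)) := by
      linear_combination F3 - (4*(c' - I*i))*ha3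
    exact mul_left_cancel₀ (mul_ne_zero (by norm_num) hi3) h4
  have hc' : c' = 0 := by
    have hc0 : i^3*c' = 0 := by
      linear_combination (-1 : ℂ)*(hF 0).1
        + ((c'-I*i)^3 - (c'-I*i)^2*(I*a) + (c'-I*i)*(I*a)^2 - (I*a)^3)*hca
        + I^4*a*ha3
    exact (mul_eq_zero.mp hc0).resolve_left hi3
  have hai : a = i := by
    have : I*a = I*i := by linear_combination hca - hc'
    exact mul_left_cancel₀ Complex.I_ne_zero this
  -- d = 0
  have he3 : e^3 = i^3 := by
    have : e*(e^3 - i^3) = 0 := by linear_combination K4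
    exact sub_eq_zero.mp ((mul_eq_zero.mp this).resolve_left he0)
  have hfe : f + I*i = I*e := by
    have h4 : (4*i^3)*(f + I*i) = (4*i^3)*(I*e) := by
      linear_combination K3 - (4*(f + I*i))*he3
    exact mul_left_cancel₀ (mul_ne_zero (by norm_num) hi3) h4
  have hd : d = 0 := by
    by_contra hd
    have hd3 : d^3 = i^3 := by
      have : d*(d^3 - i^3) = 0 := by linear_combination G4
      exact sub_eq_zero.mp ((mul_eq_zero.mp this).resolve_left hd)
    have hfd : f + I*i = -(I*d) := by
      have h4 : (4*i^3)*(f + I*i) = (4*i^3)*(-(I*d)) := by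
        linear_combination G3 - (4*(f + I*i))*hd3
      exact mul_left_cancel₀ (mul_ne_zero (by norm_num) hi3) h4
    have hed : e = -d := mul_left_cancel₀ Complex.I_ne_zero (by linear_combination hfd - hfe)
    rw [hed] at he3
    exact hi3 (by linear_combination (-1/2 : ℂ)*he3 + (-1/2 : ℂ)*hd3)
  subst hd
  -- f = 0, e = i
  have hf : f = 0 := by
    have hf0 : i^3*f = 0 := by
      linear_combination (-1 : ℂ)*(hH 0).2
        + ((f+I*i)^3 + (f+I*i)^2*(I*e) + (f+I*i)*(I*e)^2 + (I*e)^3)*hfe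
        + I^4*e*he3
    exact (mul_eq_zero.mp hf0).resolve_left hi3
  have hei : e = i := by
    have : I*e = I*i := by linear_combination -hfe + hf
    exact mul_left_cancel₀ Complex.I_ne_zero this
  exact ⟨rfl, hc', rfl, hf, rfl, rfl, hai, hei⟩

theorem example1_trivial_stabilizer (A : Matrix.GeneralLinearGroup (Fin 3) ℂ)
    (hA : ∀ v : Fin 3 → ℂ, v ≠ 0 → ∃ c : ℂ, c ≠ 0 ∧
      phiEx1 ((A : Matrix (Fin 3) (Fin 3) ℂ).mulVec v) =
        c • ((A : Matrix (Fin 3) (Fin 3) ℂ).mulVec (phiEx1 v))) :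
    ∃ c : ℂ, (A : Matrix (Fin 3) (Fin 3) ℂ) = c • (1 : Matrix (Fin 3) (Fin 3) ℂ) := by
  set M := (A : Matrix (Fin 3) (Fin 3) ℂ) with hM
  have hdet : M.det ≠ 0 := by
    have : IsUnit M.det := (Matrix.isUnit_iff_isUnit_det M).mp A.isUnit
    exact this.ne_zero
  rw [Matrix.det_fin_three] at hdet
  obtain ⟨hb, hc', hd, hf, hg, hh, hai, hei⟩ :=
    main9ex1 (M 0 0) (M 0 1) (M 0 2) (M 1 0) (M 1 1) (M 1 2) (M 2 0) (M 2 1) (M 2 2)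
      hdet (fun x y z hxyz => comp3ex1 M hA x y z hxyz)
  refine ⟨M 2 2, ?_⟩
  ext i j
  fin_cases i <;> fin_cases j <;>
    simp [Matrix.smul_apply, Matrix.one_apply, hb, hc', hd, hf, hg, hh, hai, hei]
end

section
/- Let φ : ℂ³ → ℂ³ be given by φ(x, y, z) = ((x − I·z)⁴, (y + I·z)⁴, z⁴), and let φ̄ : ℂ³ → ℂ³ (the map obtained by applying complex conjugation to the coefficients of φ) be φ̄(x, y, z) = ((x + I·z)⁴, (y − I·z)⁴, z⁴). Then there exists F ∈ GL₃(ℂ) such that for every v ∈ ℂ³ with v ≠ 0 there exists c ∈ ℂ with c ≠ 0 such that φ̄(v) = c • (F⁻¹·φ(F·v)). (That is, φ̄ = φ^F as endomorphisms of ℙ²(ℂ), so the field of moduli of φ is ℚ.) -/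
open Matrix

noncomputable def phiEx1Bar (v : Fin 3 → ℂ) : Fin 3 → ℂ :=
  ![(v 0 + Complex.I * v 2) ^ 4, (v 1 - Complex.I * v 2) ^ 4, (v 2) ^ 4]

noncomputable def swapMat : Matrix (Fin 3) (Fin 3) ℂ :=
  !![0,1,0; 1,0,0; 0,0,1]

lemma swapMat_mul_self : swapMat * swapMat = 1 := by
  simp [swapMat]
  norm_num [Matrix.mul_fin_three, ← Matrix.one_fin_three]

noncomputable def swapGL : Matrix.GeneralLinearGroup (Fin 3) ℂ :=
  ⟨swapMat, swapMat, swapMat_mul_self, swapMat_mul_self⟩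

theorem example1_field_of_moduli_Q :
    ∃ F : Matrix.GeneralLinearGroup (Fin 3) ℂ,
      ∀ v : Fin 3 → ℂ, v ≠ 0 → ∃ c : ℂ, c ≠ 0 ∧
        phiEx1Bar v =
          c • ((↑(F⁻¹) : Matrix (Fin 3) (Fin 3) ℂ).mulVec
            (phiEx1 ((F : Matrix (Fin 3) (Fin 3) ℂ).mulVec v))) := by
  refine ⟨swapGL, fun v _ => ⟨1, one_ne_zero, ?_⟩⟩
  have hinv : (↑(swapGL⁻¹) : Matrix (Fin 3) (Fin 3) ℂ) = swapMat := rfl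
  have hF : (↑swapGL : Matrix (Fin 3) (Fin 3) ℂ) = swapMat := rfl
  rw [hinv, hF, one_smul]
  funext i
  fin_cases i <;>
    simp [phiEx1, phiEx1Bar, swapMat, Matrix.mulVec, dotProduct,
      Fin.sum_univ_three]
end

section
/- Let φ(w) = 2w + 5/w, ψ(z) = (z² − 3z)/(3z − 1), and f(z) = I·√5·(z − 1)/(1 + z) for complex arguments, where √5 denotes the positive real square root of 5. Then for every z ∈ ℂ such that 1 + z ≠ 0, 3z − 1 ≠ 0, f(z) ≠ 0, and 1 + ψ(z) ≠ 0, one has φ(f(z)) = f(ψ(z)). (That is, f⁻¹ ∘ φ ∘ f = ψ as rational self-maps of ℙ¹(ℂ), so φ and ψ are ℚ-twists of each other.) -/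
/-! With `c = I√5` we have `c² = -5` and `f z = c · t z` for the Cayley map `t z = (z - 1)/(1 + z)`.
Then `φ (c t) = c (2t - 1/t)`, so the conjugacy reduces to `t (ψ z) = 2 t z - 1 / t z`, an identity
of rational functions: both sides equal `(z² - 6z + 1)/(z² - 1)`. -/

noncomputable def phiTwist (w : ℂ) : ℂ := 2 * w + 5 / w

noncomputable def psiTwist (z : ℂ) : ℂ := (z ^ 2 - 3 * z) / (3 * z - 1)

noncomputable def fTwist (z : ℂ) : ℂ :=
  Complex.I * (Real.sqrt 5 : ℂ) * (z - 1) / (1 + z)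

lemma I_mul_sqrt_five_sq : (Complex.I * (Real.sqrt 5 : ℂ)) ^ 2 = -5 := by
  have hs : (Real.sqrt 5 : ℂ) ^ 2 = 5 := by
    exact_mod_cast Real.sq_sqrt (by norm_num : (0 : ℝ) ≤ 5)
  rw [mul_pow, Complex.I_sq, hs]
  ring

lemma phiTwist_mul {c : ℂ} (hc : c ^ 2 = -5) (t : ℂ) : phiTwist (c * t) = c * (2 * t - t⁻¹) := by
  have hc0 : c ≠ 0 := by
    rintro rfl
    norm_num at hc
  have h5 : (5 : ℂ) = -c ^ 2 := by rw [hc, neg_neg]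
  rw [phiTwist, h5]
  field_simp
  ring

lemma fTwist_eq_mul (z : ℂ) :
    fTwist z = Complex.I * (Real.sqrt 5 : ℂ) * ((z - 1) / (1 + z)) := by
  rw [fTwist, mul_div_assoc]

lemma cayley_psiTwist {z : ℂ} (h1 : 1 + z ≠ 0) (h2 : 3 * z - 1 ≠ 0) (h3 : z - 1 ≠ 0) :
    (psiTwist z - 1) / (1 + psiTwist z) = 2 * ((z - 1) / (1 + z)) - ((z - 1) / (1 + z))⁻¹ := by
  rw [psiTwist, div_sub_one h2, one_add_div h2, div_div_div_cancel_right₀ h2,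
    show 3 * z - 1 + (z ^ 2 - 3 * z) = (1 + z) * (z - 1) by ring]
  field_simp
  ring

theorem twist_conjugacy_general (z : ℂ) (h1 : 1 + z ≠ 0) (h2 : 3 * z - 1 ≠ 0)
    (h3 : fTwist z ≠ 0) :
    phiTwist (fTwist z) = fTwist (psiTwist z) := by
  have hz : z - 1 ≠ 0 := by
    rintro hz
    exact h3 (by simp [fTwist, hz])
  rw [fTwist_eq_mul, fTwist_eq_mul, phiTwist_mul I_mul_sqrt_five_sq, cayley_psiTwist h1 h2 hz]

theorem twist_conjugacy (z : ℂ) (h1 : 1 + z ≠ 0) (h2 : 3 * z - 1 ≠ 0)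
    (h3 : fTwist z ≠ 0) (h4 : 1 + psiTwist z ≠ 0) :
    phiTwist (fTwist z) = fTwist (psiTwist z) :=
  twist_conjugacy_general z h1 h2 h3
end

section
/- Let φ(w) = 2w + 5/w and ψ(z) = (z² − 3z)/(3z − 1). There do not exist rational numbers a, b, c, d with a·d − b·c ≠ 0 such that, setting m(z) = (a·z + b)/(c·z + d), one has φ(m(z)) = m(ψ(z)) for every z ∈ ℂ satisfying c·z + d ≠ 0, m(z) ≠ 0, 3z − 1 ≠ 0, and c·ψ(z) + d ≠ 0. (That is, although φ and ψ are conjugate over ℂ, they are not conjugate by any element of PGL₂(ℚ): they are inequivalent ℚ-twists.) -/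
lemma phiTwist_ofReal (w : ℝ) : phiTwist w = ((2 * w + 5 / w : ℝ) : ℂ) := by
  simp [phiTwist]

lemma phiTwist_ofReal_ne_self {w : ℝ} (hw : w ≠ 0) : phiTwist w ≠ w := by
  rw [phiTwist_ofReal, Ne, Complex.ofReal_inj]
  intro h
  field_simp at h
  nlinarith [sq_pos_of_ne_zero hw]

lemma phiTwist_ofReal_ne_zero {w : ℝ} (hw : w ≠ 0) : phiTwist w ≠ 0 := by
  rw [phiTwist_ofReal, Ne, Complex.ofReal_eq_zero]
  intro h
  field_simp at h
  nlinarith [sq_pos_of_ne_zero hw]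

lemma psiTwist_zero : psiTwist 0 = 0 := by norm_num [psiTwist]

lemma psiTwist_neg_one : psiTwist (-1) = -1 := by norm_num [psiTwist]

lemma psiTwist_one : psiTwist 1 = -1 := by norm_num [psiTwist]

lemma psiTwist_three : psiTwist 3 = 0 := by norm_num [psiTwist]

/-- `φ ∘ m = m ∘ ψ` for `m z = (a z + b) / (c z + d)`, wherever neither side meets a pole; the
hypothesis `m z ≠ 0` excludes the junk value `phiTwist 0 = 0`. -/
def IsConjugacy (a b c d : ℂ) : Prop :=
  ∀ z : ℂ, c * z + d ≠ 0 → (a * z + b) / (c * z + d) ≠ 0 → 3 * z - 1 ≠ 0 →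
    c * psiTwist z + d ≠ 0 →
    phiTwist ((a * z + b) / (c * z + d)) = (a * psiTwist z + b) / (c * psiTwist z + d)

section Real

variable {a b c d : ℝ}

lemma IsConjugacy.apply_ofReal (h : IsConjugacy a b c d) {z y : ℝ} (hzy : psiTwist z = y)
    (hz : 3 * z - 1 ≠ 0) (hden : c * z + d ≠ 0) (hnum : a * z + b ≠ 0) (hdeny : c * y + d ≠ 0) :
    phiTwist ((a * z + b) / (c * z + d) : ℝ) = ((a * y + b) / (c * y + d) : ℝ) := by
  have key := h z (by exact_mod_cast hden) (by exact_mod_cast div_ne_zero hnum hden)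
    (by exact_mod_cast hz) (by rw [hzy]; exact_mod_cast hdeny)
  rw [hzy] at key
  push_cast
  exact key

lemma not_isConjugacy_of_fixed {z : ℝ} (hz : psiTwist z = z) (h3 : 3 * z - 1 ≠ 0)
    (hden : c * z + d ≠ 0) (hnum : a * z + b ≠ 0) : ¬ IsConjugacy a b c d := fun h =>
  phiTwist_ofReal_ne_self (div_ne_zero hnum hden) (h.apply_ofReal hz h3 hden hnum hden)

lemma not_isConjugacy_of_psiTwist_eq_root {z y : ℝ} (hzy : psiTwist z = y) (hy : a * y + b = 0)
    (h3 : 3 * z - 1 ≠ 0) (hden : c * z + d ≠ 0) (hnum : a * z + b ≠ 0) (hdeny : c * y + d ≠ 0) :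
    ¬ IsConjugacy a b c d := fun h =>
  phiTwist_ofReal_ne_zero (div_ne_zero hnum hden) <| by
    simpa [hy] using h.apply_ofReal hzy h3 hden hnum hdeny

theorem not_isConjugacy_of_real (hdet : a * d - b * c ≠ 0) : ¬ IsConjugacy a b c d := by
  by_cases hfix : (c * 0 + d ≠ 0 ∧ a * 0 + b ≠ 0) ∨ (c * (-1) + d ≠ 0 ∧ a * (-1) + b ≠ 0)
  · rcases hfix with ⟨hden, hnum⟩ | ⟨hden, hnum⟩
    · exact not_isConjugacy_of_fixed (by exact_mod_cast psiTwist_zero) (by norm_num) hden hnum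
    · exact not_isConjugacy_of_fixed (by exact_mod_cast psiTwist_neg_one) (by norm_num) hden hnum
  simp only [not_or, not_and_or, not_not, mul_zero, zero_add, mul_neg_one, neg_add_eq_zero] at hfix
  obtain ⟨rfl | rfl, hcd | hab⟩ := hfix
  · exact (hdet (by rw [hcd]; ring)).elim
  · -- `m z = b (z + 1) / (c z)`, so `m (ψ 1) = m (-1) = 0`
    subst a
    have hb : b ≠ 0 := by rintro rfl; exact hdet (by ring)
    have hc : c ≠ 0 := by rintro rfl; exact hdet (by ring)
    exact not_isConjugacy_of_psiTwist_eq_root (z := 1) (y := -1)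
      (by exact_mod_cast psiTwist_one) (by ring)
      (by norm_num) (by simpa using hc) (by simpa [← two_mul] using hb) (by simpa using hc)
  · -- `m z = a z / (c (z + 1))`, so `m (ψ 3) = m 0 = 0`
    subst d
    have ha : a ≠ 0 := by rintro rfl; exact hdet (by ring)
    have hc : c ≠ 0 := by rintro rfl; exact hdet (by ring)
    exact not_isConjugacy_of_psiTwist_eq_root (z := 3) (y := 0)
      (by exact_mod_cast psiTwist_three) (by ring)
      (by norm_num) (by ring_nf; simpa using hc) (by simpa using ha) (by simpa using hc)
  · exact (hdet (by rw [hab]; ring)).elim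

end Real

theorem twists_not_Q_equivalent :
    ¬ ∃ a b c d : ℚ, a * d - b * c ≠ 0 ∧
      ∀ z : ℂ, (c : ℂ) * z + (d : ℂ) ≠ 0 →
        ((a : ℂ) * z + (b : ℂ)) / ((c : ℂ) * z + (d : ℂ)) ≠ 0 →
        3 * z - 1 ≠ 0 →
        (c : ℂ) * psiTwist z + (d : ℂ) ≠ 0 →
        phiTwist (((a : ℂ) * z + (b : ℂ)) / ((c : ℂ) * z + (d : ℂ))) =
          ((a : ℂ) * psiTwist z + (b : ℂ)) / ((c : ℂ) * psiTwist z + (d : ℂ)) := by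
  rintro ⟨a, b, c, d, hdet, h⟩
  refine not_isConjugacy_of_real (a := a) (b := b) (c := c) (d := d) (by exact_mod_cast hdet) ?_
  simpa only [IsConjugacy, Complex.ofReal_ratCast] using h
end

section
/- Let d be an odd positive integer and let α(z) = I·((z − 1)/(z + 1))^d and ᾱ(z) = −I·((z − 1)/(z + 1))^d (the function with complex-conjugated coefficients). Then for every z ∈ ℂ with z ≠ 0, z ≠ 1, and z ≠ −1, one has ᾱ(z) = −1 / α(−1/z). (That is, writing σ for complex conjugation and f(z) = −1/z, one has α^σ = f⁻¹ ∘ α ∘ f, so the field of moduli of α is ℚ.) -/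
noncomputable def alphaSilverman (d : ℕ) (z : ℂ) : ℂ :=
  Complex.I * ((z - 1) / (z + 1)) ^ d

noncomputable def alphaSilvermanBar (d : ℕ) (z : ℂ) : ℂ :=
  -Complex.I * ((z - 1) / (z + 1)) ^ d

theorem silverman_field_of_moduli (d : ℕ) (hd : 0 < d) (hodd : Odd d)
    (z : ℂ) (hz0 : z ≠ 0) (hz1 : z ≠ 1) (hzm1 : z ≠ -1) :
    alphaSilvermanBar d z = -1 / alphaSilverman d (-1 / z) := by
  have h1 : z - 1 ≠ 0 := sub_ne_zero.mpr hz1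
  have h2 : z + 1 ≠ 0 := by
    intro h; apply hzm1; linear_combination h
  unfold alphaSilverman alphaSilvermanBar
  have h1n : (-1:ℂ) + z ≠ 0 := by rw [neg_add_eq_sub]; exact sub_ne_zero.mpr hz1
  have key : (-1/z - 1)/(-1/z + 1) = -((z+1)/(z-1)) := by
    field_simp
    ring
  rw [key, neg_pow, hodd.neg_one_pow, div_pow, div_pow]
  have h1' : (z - 1) ^ d ≠ 0 := pow_ne_zero _ h1
  have h2' : (z + 1) ^ d ≠ 0 := pow_ne_zero _ h2
  field_simp
  ring_nf
  simp [Complex.I_sq]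
end

section
/- With notation as in the context: let Φ be another system of the same degree d and let g ∈ GL_{N+1}(L) satisfy φ ≈ Φ^g. Let σ ∈ G and let A, F ∈ GL_{N+1}(L) satisfy φ^σ ≈ φ^A and Φ^σ ≈ Φ^F. Then φ^{(g⁻¹ · F · σ(g)) · A⁻¹} ≈ φ. (That is, the cocycles arising from two representatives of the same conjugacy class are cohomologous relative to the stabilizer 𝒜_φ.) -/
/-! Conjugation `φ ↦ φ^A` is a right action of `GL_{N+1}(L)`, intertwined with the Galois action
by `σ(φ^A) = σ(φ)^{σ(A)}`, and projective equality is an equivalence preserved by both. Hence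
`φ^{g⁻¹Fσ(g)} ≈ Φ^{Fσ(g)} ≈ σ(Φ)^{σ(g)} = σ(Φ^g) ≈ σ(φ) ≈ φ^A`,
and acting by `A⁻¹` gives the claim. -/

/-- The conjugate system `φ^A`: its `i`-th entry is
`∑ⱼ (A⁻¹)ᵢⱼ · φⱼ(A·X)`, where `φⱼ(A·X)` substitutes `Xₖ ↦ ∑ₗ Aₖₗ·Xₗ`. -/
noncomputable def conjSys {L : Type*} [Field L] {n : ℕ}
    (A : Matrix.GeneralLinearGroup (Fin n) L)
    (φ : Fin n → MvPolynomial (Fin n) L) : Fin n → MvPolynomial (Fin n) L :=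
  fun i => ∑ j, MvPolynomial.C ((↑(A⁻¹) : Matrix (Fin n) (Fin n) L) i j) *
    MvPolynomial.aeval
      (fun k => ∑ l, MvPolynomial.C ((↑A : Matrix (Fin n) (Fin n) L) k l) * MvPolynomial.X l)
      (φ j)

/-- Projective equality of systems: `ψ = c·φ` for some nonzero scalar `c`. -/
def projEq {L : Type*} [Field L] {n : ℕ}
    (φ ψ : Fin n → MvPolynomial (Fin n) L) : Prop :=
  ∃ c : L, c ≠ 0 ∧ ∀ i, ψ i = MvPolynomial.C c * φ i

/-- The system `φ^σ` obtained by applying `σ` to every coefficient. -/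
noncomputable def mapSys {L : Type*} [Field L] {n : ℕ} (σ : L →+* L)
    (φ : Fin n → MvPolynomial (Fin n) L) : Fin n → MvPolynomial (Fin n) L :=
  fun i => MvPolynomial.map σ (φ i)

/-- The matrix `σ(A)` obtained by applying `σ` to every entry of `A`. -/
noncomputable def galGL {L : Type*} [Field L] {n : ℕ} (σ : L →+* L)
    (A : Matrix.GeneralLinearGroup (Fin n) L) : Matrix.GeneralLinearGroup (Fin n) L :=
  Units.map σ.mapMatrix.toMonoidHom A


open MvPolynomial

section ConjugateSystems

variable {L : Type*} [Field L] {n : ℕ}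

lemma aeval_linearSubst_aeval_linearSubst (A B : Matrix (Fin n) (Fin n) L)
    (p : MvPolynomial (Fin n) L) :
    aeval (fun k => ∑ l, C (B k l) * X l) (aeval (fun k => ∑ l, C (A k l) * X l) p)
      = aeval (fun k => ∑ l, C ((A * B) k l) * X l) p := by
  rw [comp_aeval_apply]
  refine congrArg (aeval · p) (funext fun k => ?_)
  simp only [map_sum, map_mul, aeval_C, aeval_X, algebraMap_eq, Finset.mul_sum,
    Matrix.mul_apply, Finset.sum_mul, mul_assoc]
  exact Finset.sum_comm

lemma conjSys_conjSys (A B : Matrix.GeneralLinearGroup (Fin n) L)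
    (φ : Fin n → MvPolynomial (Fin n) L) :
    conjSys B (conjSys A φ) = conjSys (A * B) φ := by
  funext i
  simp only [conjSys, map_sum, map_mul, aeval_C, algebraMap_eq, Finset.mul_sum,
    aeval_linearSubst_aeval_linearSubst, mul_inv_rev, Units.val_mul, Matrix.mul_apply,
    Finset.sum_mul, mul_assoc, mul_left_comm]
  exact Finset.sum_comm

lemma conjSys_one (φ : Fin n → MvPolynomial (Fin n) L) : conjSys 1 φ = φ := by
  funext i
  simp [conjSys, Matrix.one_apply]

lemma conjSys_conjSys_inv (A : Matrix.GeneralLinearGroup (Fin n) L)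
    (φ : Fin n → MvPolynomial (Fin n) L) : conjSys A (conjSys A⁻¹ φ) = φ := by
  rw [conjSys_conjSys, inv_mul_cancel, conjSys_one]

lemma conjSys_inv_conjSys (A : Matrix.GeneralLinearGroup (Fin n) L)
    (φ : Fin n → MvPolynomial (Fin n) L) : conjSys A⁻¹ (conjSys A φ) = φ := by
  rw [conjSys_conjSys, mul_inv_cancel, conjSys_one]

lemma galGL_inv (σ : L →+* L) (A : Matrix.GeneralLinearGroup (Fin n) L) :
    galGL σ A⁻¹ = (galGL σ A)⁻¹ :=
  map_inv (Units.map (σ.mapMatrix : Matrix (Fin n) (Fin n) L →+* _).toMonoidHom)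
    (A : (Matrix (Fin n) (Fin n) L)ˣ)

lemma mapSys_conjSys (σ : L →+* L) (A : Matrix.GeneralLinearGroup (Fin n) L)
    (φ : Fin n → MvPolynomial (Fin n) L) :
    mapSys σ (conjSys A φ) = conjSys (galGL σ A) (mapSys σ φ) := by
  funext i
  simp only [conjSys, mapSys, ← galGL_inv, map_sum, map_mul, map_C]
  congr 1; funext j; congr 1
  rw [map_aeval, coe_eval₂Hom, aeval_def, algebraMap_eq, eval₂_map]
  congr 1
  · ext x; simp
  · funext k; simp [galGL]

end ConjugateSystems

namespace projEq

variable {L : Type*} [Field L] {n : ℕ}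

lemma symm {φ ψ : Fin n → MvPolynomial (Fin n) L} (h : projEq φ ψ) : projEq ψ φ := by
  obtain ⟨c, hc, h⟩ := h
  exact ⟨c⁻¹, inv_ne_zero hc, fun i => by
    rw [h i, ← mul_assoc, ← C_mul, inv_mul_cancel₀ hc, C_1, one_mul]⟩

lemma trans {φ ψ χ : Fin n → MvPolynomial (Fin n) L}
    (h₁ : projEq φ ψ) (h₂ : projEq ψ χ) : projEq φ χ := by
  obtain ⟨c, hc, h₁⟩ := h₁
  obtain ⟨e, he, h₂⟩ := h₂
  exact ⟨e * c, mul_ne_zero he hc, fun i => by rw [h₂ i, h₁ i, ← mul_assoc, ← C_mul]⟩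

instance : @Trans (Fin n → MvPolynomial (Fin n) L) _ _ projEq projEq projEq := ⟨trans⟩

lemma conjSys (A : Matrix.GeneralLinearGroup (Fin n) L)
    {φ ψ : Fin n → MvPolynomial (Fin n) L} (h : projEq φ ψ) :
    projEq (conjSys A φ) (conjSys A ψ) := by
  obtain ⟨c, hc, h⟩ := h
  refine ⟨c, hc, fun i => ?_⟩
  simp only [_root_.conjSys, Finset.mul_sum, h, map_mul, aeval_C, algebraMap_eq]
  congr 1; funext j
  ring

lemma mapSys (σ : L →+* L) {φ ψ : Fin n → MvPolynomial (Fin n) L} (h : projEq φ ψ) :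
    projEq (mapSys σ φ) (mapSys σ ψ) := by
  obtain ⟨c, hc, h⟩ := h
  exact ⟨σ c, (map_ne_zero σ).mpr hc,
    fun i => by simp only [_root_.mapSys, h i, map_mul, map_C]⟩

end projEq

lemma projEq_mapSys_of_conjSys {L : Type*} [Field L] {n : ℕ} (σ : L →+* L)
    {φ Φ : Fin n → MvPolynomial (Fin n) L} {g F : Matrix.GeneralLinearGroup (Fin n) L}
    (hg : projEq (conjSys g Φ) φ) (hF : projEq (conjSys F Φ) (mapSys σ Φ)) :
    projEq (conjSys (g⁻¹ * F * galGL σ g) φ) (mapSys σ φ) := by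
  have hΦ : projEq Φ (conjSys g⁻¹ φ) := by
    simpa only [conjSys_inv_conjSys] using hg.conjSys g⁻¹
  calc conjSys (g⁻¹ * F * galGL σ g) φ
      = conjSys (galGL σ g) (conjSys F (conjSys g⁻¹ φ)) := by simp only [conjSys_conjSys]
    projEq _ (conjSys (galGL σ g) (conjSys F Φ)) := (hΦ.symm.conjSys F).conjSys _
    projEq _ (conjSys (galGL σ g) (mapSys σ Φ)) := hF.conjSys _
    projEq _ (conjSys (galGL σ g) (mapSys σ (conjSys g⁻¹ φ))) := (hΦ.mapSys σ).conjSys _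
    _ = mapSys σ φ := by rw [mapSys_conjSys, galGL_inv, conjSys_conjSys_inv]

theorem cocycles_cohomologous_relative_to_stabilizer_general
    {K L : Type*} [Field K] [Field L] [Algebra K L]
    (N : ℕ)
    (φ Φ : Fin (N + 1) → MvPolynomial (Fin (N + 1)) L)
    (g : Matrix.GeneralLinearGroup (Fin (N + 1)) L)
    (hg : projEq (conjSys g Φ) φ)
    (σ : L ≃ₐ[K] L)
    (A F : Matrix.GeneralLinearGroup (Fin (N + 1)) L)
    (hA : projEq (conjSys A φ) (mapSys (σ : L →+* L) φ))
    (hF : projEq (conjSys F Φ) (mapSys (σ : L →+* L) Φ)) :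
    projEq (conjSys ((g⁻¹ * F * galGL (σ : L →+* L) g) * A⁻¹) φ) φ := by
  calc conjSys (g⁻¹ * F * galGL (σ : L →+* L) g * A⁻¹) φ
      = conjSys A⁻¹ (conjSys (g⁻¹ * F * galGL (σ : L →+* L) g) φ) :=
        (conjSys_conjSys _ _ _).symm
    projEq _ (conjSys A⁻¹ (mapSys (σ : L →+* L) φ)) :=
        (projEq_mapSys_of_conjSys _ hg hF).conjSys _
    projEq _ (conjSys A⁻¹ (conjSys A φ)) := hA.symm.conjSys _
    _ = φ := conjSys_inv_conjSys A φ

theorem cocycles_cohomologous_relative_to_stabilizer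
    {K L : Type*} [Field K] [Field L] [Algebra K L] [IsSepClosure K L]
    (N d : ℕ) (hN : 1 ≤ N) (hd : 1 ≤ d)
    (φ Φ : Fin (N + 1) → MvPolynomial (Fin (N + 1)) L)
    (hhomφ : ∀ i, (φ i).IsHomogeneous d) (hneφ : ∃ i, φ i ≠ 0)
    (hhomΦ : ∀ i, (Φ i).IsHomogeneous d) (hneΦ : ∃ i, Φ i ≠ 0)
    (g : Matrix.GeneralLinearGroup (Fin (N + 1)) L)
    (hg : projEq (conjSys g Φ) φ)
    (σ : L ≃ₐ[K] L)
    (A F : Matrix.GeneralLinearGroup (Fin (N + 1)) L)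
    (hA : projEq (conjSys A φ) (mapSys (σ : L →+* L) φ))
    (hF : projEq (conjSys F Φ) (mapSys (σ : L →+* L) Φ)) :
    projEq (conjSys ((g⁻¹ * F * galGL (σ : L →+* L) g) * A⁻¹) φ) φ :=
  cocycles_cohomologous_relative_to_stabilizer_general N φ Φ g hg σ A F hA hF
end
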